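/- arXiv:1004.3083 — 2 statements merged into one kernel-verified Lean document; each statement's English description precedes it below -/
import Mathlib

section
/- Assume char F ≠ 2 and let a,b,c,d be paths in the double quiver Q* that are all closed in the same vertex v ∈ Q₀. Then: (R₁) tr(abcd) ≡ 0; and (R₂) tr(abc) ≡ 0 whenever a and b intersect at a vertex different from v, i.e., a = x₁y₁ and b = x₂y₂ for paths x₁,x₂,y₁,y₂ in Q* with x₁'' = x₂'' = w for some vertex w ≠ v. -/
open MvPolynomial Matrix

set_option maxHeartbeats 1000000
set_option synthInstance.maxHeartbeats 400000

section QuiverSemiInvariants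

variable {V A : Type}

/-- Arrows of the double quiver `Q*`: `Sum.inl a` is the arrow `a ∈ Q₁`,
`Sum.inr a` is the reversed arrow `a*`. -/
abbrev DArrow (A : Type) : Type := A ⊕ A

/-- The involution `x ↦ x*` on arrows of the double quiver. -/
def starArrow : DArrow A → DArrow A := Sum.elim Sum.inr Sum.inl

variable (hd tl : A → V)

/-- Head of a double arrow. -/
def dhd : DArrow A → V := Sum.elim hd tl

/-- Tail of a double arrow. -/
def dtl : DArrow A → V := Sum.elim tl hd

/-- The path `a*` associated to a path `a` (a path is written as the list of its arrows,
in the order of the composition `a₁⋯a_s`). -/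
def starPath (l : List (DArrow A)) : List (DArrow A) := (l.map starArrow).reverse

/-- The head vertex of a path. -/
def fstV (l : List (DArrow A)) : Option V := l.head?.map (dhd hd tl)

/-- The tail vertex of a path. -/
def lstV (l : List (DArrow A)) : Option V := l.getLast?.map (dtl hd tl)

/-- `l` is a path in the double quiver: it is nonempty and consecutive arrows compose
(the tail of each arrow is the head of the next one). -/
def IsPathL (l : List (DArrow A)) : Prop :=
  l ≠ [] ∧ l.Chain' fun x y => dtl hd tl x = dhd hd tl y

/-- `l` is a closed path: a path whose head vertex equals its tail vertex. -/
def IsClosedPath (l : List (DArrow A)) : Prop :=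
  IsPathL hd tl l ∧ fstV hd tl l = lstV hd tl l

/-- The set of arrows occurring in the path `l`. -/
def ArrL (l : List (DArrow A)) : Set (DArrow A) := {x | x ∈ l}

/-- The set of vertices of a set of double arrows. -/
def VerS (S : Set (DArrow A)) : Set V := {v | ∃ x ∈ S, dhd hd tl x = v ∨ dtl hd tl x = v}

/-- The set of vertices occurring in the path `l`. -/
def VerL (l : List (DArrow A)) : Set V := VerS hd tl (ArrL l)

/-- A multilinear path: a closed path in which every double arrow occurs at most once. -/
def IsMultilinear (l : List (DArrow A)) : Prop := IsClosedPath hd tl l ∧ l.Nodup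

/-- A primitive closed path: a closed path without self-intersections, i.e. the
vertices it passes through are pairwise distinct. -/
def IsPrimitive (l : List (DArrow A)) : Prop :=
  IsClosedPath hd tl l ∧ (l.map (dhd hd tl)).Nodup

/-- The multidegree of a path. -/
def mdegL [DecidableEq A] (l : List (DArrow A)) : A → ℕ := fun a =>
  l.count (Sum.inl a) + l.count (Sum.inr a)

/-- A tree path: a multilinear path such that whenever both `x` and `x*` occur
(for `x ∈ Q₁`), the remaining arrows split into two nonempty parts with disjoint
vertex sets. -/
def IsTreePath (l : List (DArrow A)) : Prop :=
  IsMultilinear hd tl l ∧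
    ∀ x : A, Sum.inl x ∈ l → Sum.inr x ∈ l →
      ∃ G L : Set (DArrow A),
        G ∪ L = ArrL l \ {Sum.inl x, Sum.inr x} ∧ Disjoint G L ∧
        G.Nonempty ∧ L.Nonempty ∧ Disjoint (VerS hd tl G) (VerS hd tl L)

/-- A simple tree path: a tree path all of whose arrows occurring without their star
are loops. -/
def IsSimpleTreePath (l : List (DArrow A)) : Prop :=
  IsTreePath hd tl l ∧ ∀ x ∈ l, starArrow x ∉ l → dhd hd tl x = dtl hd tl x

/-- A decomposition of a closed path into primitive closed paths: a family of primitive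
closed paths with pairwise disjoint arrow sets whose arrow sets together give the set of
arrows of `l`. -/
def IsDecomposition (l : List (DArrow A)) (s : ℕ) (b : Fin s → List (DArrow A)) : Prop :=
  (∀ i, IsPrimitive hd tl (b i)) ∧
    (∀ i j, i ≠ j → Disjoint (ArrL (b i)) (ArrL (b j))) ∧
    (⋃ i, ArrL (b i)) = ArrL l

/-- The base relation for the equivalence `∼` on closed paths: `a ∼ a*` and `xy ∼ yx`. -/
def PathRel (l m : List (DArrow A)) : Prop :=
  m = starPath l ∨ ∃ u v : List (DArrow A), l = u ++ v ∧ m = v ++ u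

/-- The smallest equivalence with `a ∼ a*` and `xy ∼ yx`. -/
def PathEquiv : List (DArrow A) → List (DArrow A) → Prop :=
  Relation.EqvGen PathRel

/-- The number of common vertices of the `i`-th and `j`-th member of a family of paths:
the mark of the corresponding edge of the diagram which is the type of a decomposition. -/
noncomputable def interCard (s : ℕ) (b : Fin s → List (DArrow A)) (i j : Fin s) : ℕ :=
  (VerL hd tl (b i) ∩ VerL hd tl (b j)).ncard

/-- Three closed paths form a fan: all pairwise vertex intersections are one and the
same single vertex. -/
def FormFan (l₁ l₂ l₃ : List (DArrow A)) : Prop :=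
  ∃ u : V,
    VerL hd tl l₁ ∩ VerL hd tl l₂ = {u} ∧
    VerL hd tl l₁ ∩ VerL hd tl l₃ = {u} ∧
    VerL hd tl l₂ ∩ VerL hd tl l₃ = {u}

/-- Three closed paths form a chain (with `l₂` in the middle): `l₂ ∼ c₁c₂` for paths
`c₁, c₂` such that both endpoints of `c₁` lie in `Ver l₁` and `Ver c₁ ∩ Ver l₃ = ∅`. -/
def FormChain (l₁ l₂ l₃ : List (DArrow A)) : Prop :=
  ∃ c₁ c₂ : List (DArrow A),
    PathEquiv l₂ (c₁ ++ c₂) ∧ IsPathL hd tl c₁ ∧ IsPathL hd tl c₂ ∧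
    (∀ v ∈ fstV hd tl c₁, v ∈ VerL hd tl l₁) ∧
    (∀ v ∈ lstV hd tl c₁, v ∈ VerL hd tl l₁) ∧
    Disjoint (VerL hd tl c₁) (VerL hd tl l₃)

/-- The diagram (type) of the decomposition `b` is admissible: all edge marks are `1`
or `2` and every cycle of the diagram is a triangle all of whose edges are marked `1`. -/
def AdmissibleDiagram (s : ℕ) (b : Fin s → List (DArrow A)) : Prop :=
  (∀ i j : Fin s, i ≠ j → interCard hd tl s b i j ≤ 2) ∧
    ∀ (k : ℕ) (c : ZMod k → Fin s), 3 ≤ k → Function.Injective c →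
      (∀ i : ZMod k, 1 ≤ interCard hd tl s b (c i) (c (i + 1))) →
      k = 3 ∧ ∀ i : ZMod k, interCard hd tl s b (c i) (c (i + 1)) = 1

/-- The closed path `l` is admissible with respect to the decomposition `b`. -/
def AdmissibleWrt (l : List (DArrow A)) (s : ℕ) (b : Fin s → List (DArrow A)) : Prop :=
  IsDecomposition hd tl l s b ∧ AdmissibleDiagram hd tl s b ∧
    (∀ i j k : Fin s, i ≠ j → j ≠ k → i ≠ k →
      1 ≤ interCard hd tl s b i j → 1 ≤ interCard hd tl s b j k →
      1 ≤ interCard hd tl s b i k → FormFan hd tl (b i) (b j) (b k)) ∧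
    ∀ i j k : Fin s, i ≠ j → j ≠ k → i ≠ k →
      interCard hd tl s b i j = 2 → interCard hd tl s b j k = 2 →
      FormChain hd tl (b i) (b j) (b k)

/-- The closed path `l` is admissible: it is admissible with respect to some
decomposition into primitive closed paths. -/
def IsAdmissible (l : List (DArrow A)) : Prop := ∃ s b, AdmissibleWrt hd tl l s b

variable (F : Type) [Field F]

/-- The coordinate ring `F[H]` of the space of representations of dimension `(2,…,2)`. -/
abbrev PolyR (F A : Type) [Field F] : Type := MvPolynomial (A × Fin 2 × Fin 2) F

/-- The generic `2×2` matrix attached to the arrow `a ∈ Q₁`. -/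
noncomputable def genMat (a : A) : Matrix (Fin 2) (Fin 2) (PolyR F A) :=
  Matrix.of fun i j => MvPolynomial.X (a, i, j)

/-- The matrix `J₂` of the standard skew-symmetric bilinear form. -/
def J2 (R : Type) [Ring R] : Matrix (Fin 2) (Fin 2) R := !![0, 1; -1, 0]

/-- The matrix attached to a double arrow: `X_a` for `a ∈ Q₁` and
`X_{a*} = -J₂ X_aᵀ J₂`. -/
noncomputable def XArr : DArrow A → Matrix (Fin 2) (Fin 2) (PolyR F A) :=
  Sum.elim (genMat F) fun a => -(J2 (PolyR F A) * (genMat F a)ᵀ * J2 (PolyR F A))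

/-- The matrix `X_b` of a path `b = b₁⋯b_s` in the double quiver. -/
noncomputable def XPath (l : List (DArrow A)) : Matrix (Fin 2) (Fin 2) (PolyR F A) :=
  (l.map (XArr F)).prod

/-- The action of a family `g` of `2×2`-matrices on the coordinate ring:
`x^a_{ij} ↦ (i,j)`-entry of `g_{a'}⁻¹ X_a g_{a''}`. -/
noncomputable def actHom (g : V → Matrix (Fin 2) (Fin 2) F) :
    PolyR F A →ₐ[F] PolyR F A :=
  MvPolynomial.aeval fun p : A × Fin 2 × Fin 2 =>
    (((g (hd p.1))⁻¹).map (algebraMap F (PolyR F A)) * genMat F p.1 *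
        (g (tl p.1)).map (algebraMap F (PolyR F A)))
      p.2.1 p.2.2

/-- The algebra of semi-invariants `SI(Q)`: the elements of `F[H]` fixed by every
family `g = (g_v)` of matrices of determinant one. -/
noncomputable def SIalg : Subalgebra F (PolyR F A) :=
  ⨅ g : {g : V → Matrix (Fin 2) (Fin 2) F // ∀ v, (g v).det = 1},
    AlgHom.equalizer (actHom hd tl F g.1) (AlgHom.id F (PolyR F A))

/-- The augmentation ideal `SI(Q)⁺` of semi-invariants without constant term
(equivalently, the ideal generated by the homogeneous elements of positive degree). -/
noncomputable def augIdeal : Ideal (SIalg hd tl F) :=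
  RingHom.ker (MvPolynomial.constantCoeff.comp (SIalg hd tl F).val.toRingHom)

/-- A semi-invariant is decomposable (`≡ 0`) if it lies in the ideal `(SI(Q)⁺)²`. -/
def Decomposable (f : PolyR F A) : Prop :=
  f ∈ (SIalg hd tl F).val ''
      ((augIdeal hd tl F * augIdeal hd tl F : Ideal (SIalg hd tl F)) : Set (SIalg hd tl F))

end QuiverSemiInvariants

/-!
The trace of the matrix of a closed path at `u` is a semi-invariant without constant term: the
action replaces `X_b` by `g_u⁻¹ X_b g_u`, and `X_{a*} = adj X_a` transforms in the same way since
`adj g = g⁻¹` when `det g = 1`. Hence every product of two such traces is decomposable. The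
polarized Cayley–Hamilton identity and `M + adj M = tr M` for `2 × 2` matrices then give
`tr(xyz) ≡ -tr(yxz)` and `tr(MN) ≡ -tr(adj M · N)` for closed paths, and together with the
cyclicity of the trace they show that twice the traces in `R₁` and `R₂` are decomposable.
-/

section TwoByTwo

variable {R : Type} [CommRing R]

theorem neg_J2_mul_transpose_mul_J2 (M : Matrix (Fin 2) (Fin 2) R) :
    -(J2 R * Mᵀ * J2 R) = M.adjugate := by
  ext i j
  fin_cases i <;> fin_cases j <;>
    simp [J2, adjugate_fin_two, mul_apply, Fin.sum_univ_two, vecMul, dotProduct]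

theorem adjugate_adjugate_fin_two (M : Matrix (Fin 2) (Fin 2) R) : M.adjugate.adjugate = M := by
  simp [adjugate_adjugate M (by simp)]

/-- Polarized Cayley–Hamilton identity for `2 × 2` matrices. -/
theorem trace_mul_mul_add_trace_mul_mul_fin_two (X Y Z : Matrix (Fin 2) (Fin 2) R) :
    (X * Y * Z).trace + (Y * X * Z).trace =
      X.trace * (Y * Z).trace + Y.trace * (X * Z).trace + (X * Y).trace * Z.trace
        - X.trace * Y.trace * Z.trace := by
  simp only [trace_fin_two, mul_apply, Fin.sum_univ_two]
  ring

theorem trace_mul_add_trace_adjugate_mul_fin_two (M N : Matrix (Fin 2) (Fin 2) R) :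
    (M * N).trace + (M.adjugate * N).trace = M.trace * N.trace := by
  simp only [trace_fin_two, mul_apply, Fin.sum_univ_two, adjugate_fin_two, of_apply, cons_val',
    cons_val_zero, cons_val_one, empty_val', cons_val_fin_one]
  ring

end TwoByTwo

theorem Submodule.mem_of_add_self_mem {K M : Type*} [Field K] [AddCommGroup M] [Module K M]
    (p : Submodule K M) {x : M} (h2 : (2 : K) ≠ 0) (h : x + x ∈ p) : x ∈ p := by
  rwa [← p.smul_mem_iff h2, two_smul]

section PathMatrices

variable {V A : Type} (hd tl : A → V) (F : Type) [Field F]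

/-- `IsPathMatrix hd tl F u u' M`: `M = X_b` for a path `b` in `Q*` from `u` to `u'`. -/
inductive IsPathMatrix : V → V → Matrix (Fin 2) (Fin 2) (PolyR F A) → Prop
  | arrow (x : DArrow A) : IsPathMatrix (dhd hd tl x) (dtl hd tl x) (XArr F x)
  | mul {u w u' : V} {M N : Matrix (Fin 2) (Fin 2) (PolyR F A)} :
      IsPathMatrix u w M → IsPathMatrix w u' N → IsPathMatrix u u' (M * N)

theorem dhd_starArrow (x : DArrow A) : dhd hd tl (starArrow x) = dtl hd tl x := by
  cases x <;> rfl

theorem dtl_starArrow (x : DArrow A) : dtl hd tl (starArrow x) = dhd hd tl x := by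
  cases x <;> rfl

theorem XArr_inr (a : A) : XArr F (Sum.inr a) = (genMat F a).adjugate :=
  neg_J2_mul_transpose_mul_J2 _

theorem XArr_starArrow (x : DArrow A) : XArr F (starArrow x) = (XArr F x).adjugate := by
  cases x with
  | inl a => exact XArr_inr F a
  | inr a =>
    rw [XArr_inr, adjugate_adjugate_fin_two]
    rfl

theorem XPath_singleton (x : DArrow A) : XPath F [x] = XArr F x := by
  simp [XPath]

theorem XPath_append (l m : List (DArrow A)) : XPath F (l ++ m) = XPath F l * XPath F m := by
  simp [XPath]

variable {hd tl F}

theorem IsPathMatrix.adjugate {u u' : V} {M : Matrix (Fin 2) (Fin 2) (PolyR F A)}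
    (h : IsPathMatrix hd tl F u u' M) : IsPathMatrix hd tl F u' u M.adjugate := by
  induction h with
  | arrow x =>
    rw [← XArr_starArrow]
    simpa only [dhd_starArrow, dtl_starArrow] using IsPathMatrix.arrow (F := F) (starArrow x)
  | mul _ _ ihM ihN =>
    rw [adjugate_mul_distrib]
    exact ihN.mul ihM

theorem isPathMatrix_XPath {l : List (DArrow A)} {u u' : V} (hl : IsPathL hd tl l)
    (hu : fstV hd tl l = some u) (hu' : lstV hd tl l = some u') :
    IsPathMatrix hd tl F u u' (XPath F l) := by
  induction l generalizing u with
  | nil => exact absurd rfl hl.1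
  | cons x l ih =>
    obtain rfl : dhd hd tl x = u := by simpa [fstV] using hu
    cases l with
    | nil =>
      obtain rfl : dtl hd tl x = u' := by simpa [lstV] using hu'
      rw [XPath_singleton]
      exact .arrow x
    | cons y l =>
      obtain ⟨hxy, hch⟩ := List.isChain_cons_cons.mp hl.2
      rw [← List.singleton_append, XPath_append, XPath_singleton]
      exact (IsPathMatrix.arrow x).mul
        (ih ⟨List.cons_ne_nil _ _, hch⟩ (by simp [fstV, hxy]) (by simpa [lstV] using hu'))

theorem isPathMatrix_XPath_of_isClosedPath {l : List (DArrow A)} {v : V}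
    (hl : IsClosedPath hd tl l) (hv : fstV hd tl l = some v) :
    IsPathMatrix hd tl F v v (XPath F l) :=
  isPathMatrix_XPath hl.1 hv (hl.2 ▸ hv)

theorem isPathMatrix_XPath_of_isClosedPath_append {x y : List (DArrow A)} {v w : V}
    (hxy : IsClosedPath hd tl (x ++ y)) (hv : fstV hd tl (x ++ y) = some v)
    (hx : IsPathL hd tl x) (hy : IsPathL hd tl y) (hw : lstV hd tl x = some w) :
    IsPathMatrix hd tl F v w (XPath F x) ∧ IsPathMatrix hd tl F w v (XPath F y) := by
  have hxv : fstV hd tl x = some v := by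
    rwa [fstV, List.head?_append_of_ne_nil _ hx.1] at hv
  have hyv : lstV hd tl y = some v := by
    rw [← hv, hxy.2, lstV, lstV, List.getLast?_append_of_ne_nil _ hy.1]
  obtain ⟨a, ha, rfl⟩ := Option.map_eq_some_iff.mp hw
  obtain ⟨b, y, rfl⟩ := List.ne_nil_iff_exists_cons.mp hy.1
  have hab : dtl hd tl a = dhd hd tl b :=
    (List.isChain_append.mp hxy.1.2).2.2 a ha b rfl
  exact ⟨isPathMatrix_XPath hx hxv hw,
    isPathMatrix_XPath hy (by simp [fstV, hab]) hyv⟩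

end PathMatrices

section SemiInvariance

variable {V A : Type} {hd tl : A → V} {F : Type} [Field F]

theorem IsPathMatrix.mapMatrix_eq {φ : PolyR F A →ₐ[F] PolyR F A}
    {G : V → Matrix (Fin 2) (Fin 2) (PolyR F A)} (hG : ∀ u, (G u).det = 1)
    (hφ : ∀ a, φ.mapMatrix (genMat F a) = (G (hd a)).adjugate * genMat F a * G (tl a))
    {u u' : V} {M : Matrix (Fin 2) (Fin 2) (PolyR F A)} (h : IsPathMatrix hd tl F u u' M) :
    φ.mapMatrix M = (G u).adjugate * M * G u' := by
  induction h with
  | arrow x =>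
    cases x with
    | inl a => exact hφ a
    | inr a =>
      change φ.mapMatrix (XArr F (Sum.inr a)) =
        (G (tl a)).adjugate * XArr F (Sum.inr a) * G (hd a)
      rw [XArr_inr, AlgHom.map_adjugate, hφ, adjugate_mul_distrib, adjugate_mul_distrib,
        adjugate_adjugate_fin_two, Matrix.mul_assoc]
  | @mul u w u' M N _ _ ihM ihN =>
    have hGw : G w * (G w).adjugate = 1 := by rw [mul_adjugate, hG, one_smul]
    calc φ.mapMatrix (M * N) = (G u).adjugate * M * (G w * (G w).adjugate) * N * G u' := by
          rw [map_mul, ihM, ihN]; simp only [Matrix.mul_assoc]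
      _ = (G u).adjugate * (M * N) * G u' := by rw [hGw, Matrix.mul_one, Matrix.mul_assoc _ M]

theorem IsPathMatrix.map_trace_eq {φ : PolyR F A →ₐ[F] PolyR F A}
    {G : V → Matrix (Fin 2) (Fin 2) (PolyR F A)} (hG : ∀ u, (G u).det = 1)
    (hφ : ∀ a, φ.mapMatrix (genMat F a) = (G (hd a)).adjugate * genMat F a * G (tl a))
    {u : V} {M : Matrix (Fin 2) (Fin 2) (PolyR F A)} (h : IsPathMatrix hd tl F u u M) :
    φ M.trace = M.trace := by
  rw [AddMonoidHom.map_trace, ← AlgHom.mapMatrix_apply, h.mapMatrix_eq hG hφ, trace_mul_cycle,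
    mul_adjugate, hG, one_smul, Matrix.one_mul]

theorem actHom_mapMatrix_genMat {g : V → Matrix (Fin 2) (Fin 2) F} (hg : ∀ u, (g u).det = 1)
    (a : A) :
    (actHom hd tl F g).mapMatrix (genMat F a) =
      ((algebraMap F (PolyR F A)).mapMatrix (g (hd a))).adjugate * genMat F a *
        (algebraMap F (PolyR F A)).mapMatrix (g (tl a)) := by
  have hinv : (g (hd a))⁻¹ = (g (hd a)).adjugate := by
    rw [inv_def, hg, Ring.inverse_one, one_smul]
  rw [← RingHom.map_adjugate, ← hinv]
  refine Matrix.ext fun i j => ?_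
  simp [actHom, genMat]

theorem IsPathMatrix.trace_mem_SIalg {u : V} {M : Matrix (Fin 2) (Fin 2) (PolyR F A)}
    (h : IsPathMatrix hd tl F u u M) : M.trace ∈ SIalg hd tl F := by
  rw [SIalg, Algebra.mem_iInf]
  rintro ⟨g, hg⟩
  exact h.map_trace_eq (G := fun v => (algebraMap F (PolyR F A)).mapMatrix (g v))
    (fun v => by rw [← RingHom.map_det, hg, map_one])
    (actHom_mapMatrix_genMat hg)

theorem IsPathMatrix.constantCoeff_mapMatrix {u u' : V} {M : Matrix (Fin 2) (Fin 2) (PolyR F A)}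
    (h : IsPathMatrix hd tl F u u' M) : (constantCoeff : PolyR F A →+* F).mapMatrix M = 0 := by
  have hgen : ∀ a, (constantCoeff : PolyR F A →+* F).mapMatrix (genMat F a) = 0 := fun a => by
    ext i j
    simp [genMat]
  induction h with
  | arrow x =>
    cases x with
    | inl a => exact hgen a
    | inr a => rw [XArr_inr, RingHom.map_adjugate, hgen, adjugate_zero]
  | mul _ _ ihM _ => rw [map_mul, ihM, zero_mul]

end SemiInvariance

section Decomposables

variable {V A : Type} (hd tl : A → V) (F : Type) [Field F]

/-- `SI(Q)⁺` as a subspace of `F[H]`. -/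
noncomputable def augSubmodule : Submodule F (PolyR F A) :=
  ((augIdeal hd tl F).restrictScalars F).map (SIalg hd tl F).val.toLinearMap

/-- `(SI(Q)⁺)²` as a subspace of `F[H]`. -/
noncomputable def decomposableSubmodule : Submodule F (PolyR F A) :=
  ((augIdeal hd tl F * augIdeal hd tl F).restrictScalars F).map (SIalg hd tl F).val.toLinearMap

variable {hd tl F}

theorem mem_decomposableSubmodule_iff {f : PolyR F A} :
    f ∈ decomposableSubmodule hd tl F ↔ Decomposable hd tl F f :=
  Iff.rfl

theorem mul_mem_augSubmodule {p q : PolyR F A} (hp : p ∈ augSubmodule hd tl F)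
    (hq : q ∈ augSubmodule hd tl F) : p * q ∈ augSubmodule hd tl F := by
  obtain ⟨p, hp, rfl⟩ := hp
  obtain ⟨q, hq, rfl⟩ := hq
  exact ⟨p * q, Ideal.mul_mem_left _ _ hq, rfl⟩

theorem mul_mem_decomposableSubmodule {p q : PolyR F A} (hp : p ∈ augSubmodule hd tl F)
    (hq : q ∈ augSubmodule hd tl F) : p * q ∈ decomposableSubmodule hd tl F := by
  obtain ⟨p, hp, rfl⟩ := hp
  obtain ⟨q, hq, rfl⟩ := hq
  exact ⟨p * q, Ideal.mul_mem_mul hp hq, rfl⟩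

theorem IsPathMatrix.trace_mem_augSubmodule {u : V} {M : Matrix (Fin 2) (Fin 2) (PolyR F A)}
    (h : IsPathMatrix hd tl F u u M) : M.trace ∈ augSubmodule hd tl F := by
  refine ⟨⟨M.trace, h.trace_mem_SIalg⟩, ?_, rfl⟩
  change constantCoeff M.trace = 0
  rw [AddMonoidHom.map_trace, ← RingHom.mapMatrix_apply, h.constantCoeff_mapMatrix, trace_zero]

end Decomposables

section Relations

variable {V A : Type} {hd tl : A → V} {F : Type} [Field F] {u v w : V}
  {X Y Z : Matrix (Fin 2) (Fin 2) (PolyR F A)}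

theorem trace_mul_mul_add_trace_mul_mul_mem (hX : IsPathMatrix hd tl F u u X)
    (hY : IsPathMatrix hd tl F u u Y) (hZ : IsPathMatrix hd tl F u u Z) :
    (X * Y * Z).trace + (Y * X * Z).trace ∈ decomposableSubmodule hd tl F := by
  have hX' := hX.trace_mem_augSubmodule
  have hY' := hY.trace_mem_augSubmodule
  have hZ' := hZ.trace_mem_augSubmodule
  rw [trace_mul_mul_add_trace_mul_mul_fin_two]
  refine sub_mem (add_mem (add_mem ?_ ?_) ?_) (mul_mem_decomposableSubmodule
    (mul_mem_augSubmodule hX' hY') hZ')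
  · exact mul_mem_decomposableSubmodule hX' (hY.mul hZ).trace_mem_augSubmodule
  · exact mul_mem_decomposableSubmodule hY' (hX.mul hZ).trace_mem_augSubmodule
  · exact mul_mem_decomposableSubmodule (hX.mul hY).trace_mem_augSubmodule hZ'

theorem trace_mul_add_trace_adjugate_mul_mem (hX : IsPathMatrix hd tl F u u X)
    (hY : IsPathMatrix hd tl F v v Y) :
    (X * Y).trace + (X.adjugate * Y).trace ∈ decomposableSubmodule hd tl F := by
  rw [trace_mul_add_trace_adjugate_mul_fin_two]
  exact mul_mem_decomposableSubmodule hX.trace_mem_augSubmodule hY.trace_mem_augSubmodule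

/-- Relation `R₁`: modulo decomposables `tr(xyz) ≡ -tr(yxz)`, so
`tr(XYZW) ≡ -tr(YXZW) = -tr(XZWY) ≡ tr(ZXWY) = tr(XWYZ) ≡ -tr(WXYZ) = -tr(XYZW)`. -/
theorem trace_mul_mul_mul_mem (h2 : (2 : F) ≠ 0) {W : Matrix (Fin 2) (Fin 2) (PolyR F A)}
    (hX : IsPathMatrix hd tl F v v X) (hY : IsPathMatrix hd tl F v v Y)
    (hZ : IsPathMatrix hd tl F v v Z) (hW : IsPathMatrix hd tl F v v W) :
    (X * Y * Z * W).trace ∈ decomposableSubmodule hd tl F := by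
  have key : (X * Y * Z * W).trace + (X * Y * Z * W).trace =
      ((X * Y * (Z * W)).trace + (Y * X * (Z * W)).trace)
        - ((X * Z * (W * Y)).trace + (Z * X * (W * Y)).trace)
        + ((X * W * (Y * Z)).trace + (W * X * (Y * Z)).trace) := by
    simp only [trace_fin_two, mul_apply, Fin.sum_univ_two]
    ring
  refine Submodule.mem_of_add_self_mem _ h2 ?_
  rw [key]
  exact add_mem
    (sub_mem (trace_mul_mul_add_trace_mul_mul_mem hX hY (hZ.mul hW))
      (trace_mul_mul_add_trace_mul_mul_mem hX hZ (hW.mul hY)))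
    (trace_mul_mul_add_trace_mul_mul_mem hX hW (hY.mul hZ))

/-- Relation `R₂`, for `a = x₁y₁`, `b = x₂y₂` and `x* = adj x`: `tr(MN) ≡ -tr(M*N)` for the
closed paths `M = y₁x₂, y₂x₁` at `w` and `M = ab` at `v` gives `tr(abc) ≡ -tr(x₁x₂*·y₁*y₂·c)`,
`tr(y₁*y₂·x₁x₂*·c) ≡ -tr(a*b*c)` and `tr(b*a*c) ≡ -tr(abc)`; as swapping the first two of three
closed paths at `v` changes the sign, `tr(abc) ≡ -tr(abc)`. -/
theorem trace_mul_mul_mul_mul_mem (h2 : (2 : F) ≠ 0)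
    {X₁ Y₁ X₂ Y₂ C : Matrix (Fin 2) (Fin 2) (PolyR F A)}
    (hX₁ : IsPathMatrix hd tl F v w X₁) (hY₁ : IsPathMatrix hd tl F w v Y₁)
    (hX₂ : IsPathMatrix hd tl F v w X₂) (hY₂ : IsPathMatrix hd tl F w v Y₂)
    (hC : IsPathMatrix hd tl F v v C) :
    (X₁ * Y₁ * (X₂ * Y₂) * C).trace ∈ decomposableSubmodule hd tl F := by
  have key : (X₁ * Y₁ * (X₂ * Y₂) * C).trace + (X₁ * Y₁ * (X₂ * Y₂) * C).trace =
      ((Y₁ * X₂ * (Y₂ * C * X₁)).trace + ((Y₁ * X₂).adjugate * (Y₂ * C * X₁)).trace)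
        - ((X₁ * X₂.adjugate * (Y₁.adjugate * Y₂) * C).trace
          + (Y₁.adjugate * Y₂ * (X₁ * X₂.adjugate) * C).trace)
        + ((Y₂ * X₁ * (X₂.adjugate * C * Y₁.adjugate)).trace
          + ((Y₂ * X₁).adjugate * (X₂.adjugate * C * Y₁.adjugate)).trace)
        - (((X₁ * Y₁).adjugate * (X₂ * Y₂).adjugate * C).trace
          + ((X₂ * Y₂).adjugate * (X₁ * Y₁).adjugate * C).trace)
        + ((X₁ * Y₁ * (X₂ * Y₂) * C).trace
          + ((X₁ * Y₁ * (X₂ * Y₂)).adjugate * C).trace) := by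
    simp only [adjugate_mul_distrib, adjugate_fin_two, trace_fin_two, mul_apply,
      Fin.sum_univ_two, of_apply, cons_val', cons_val_zero, cons_val_one, empty_val',
      cons_val_fin_one]
    ring
  refine Submodule.mem_of_add_self_mem _ h2 ?_
  rw [key]
  refine add_mem (sub_mem (add_mem (sub_mem ?_ ?_) ?_) ?_) ?_
  · exact trace_mul_add_trace_adjugate_mul_mem (hY₁.mul hX₂) ((hY₂.mul hC).mul hX₁)
  · exact trace_mul_mul_add_trace_mul_mul_mem (hX₁.mul hX₂.adjugate)
      (hY₁.adjugate.mul hY₂) hC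
  · exact trace_mul_add_trace_adjugate_mul_mem (hY₂.mul hX₁)
      ((hX₂.adjugate.mul hC).mul hY₁.adjugate)
  · exact trace_mul_mul_add_trace_mul_mul_mem (hX₁.mul hY₁).adjugate
      (hX₂.mul hY₂).adjugate hC
  · exact trace_mul_add_trace_adjugate_mul_mem ((hX₁.mul hY₁).mul (hX₂.mul hY₂)) hC

end Relations

theorem statement6_general (F : Type) [Field F] (hchar : ringChar F ≠ 2)
    {V A : Type} (hd tl : A → V) (v : V) :
    -- (R₁) tr(abcd) ≡ 0
    (∀ a b c d : List (DArrow A),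
      IsClosedPath hd tl a → IsClosedPath hd tl b → IsClosedPath hd tl c →
      IsClosedPath hd tl d →
      fstV hd tl a = some v → fstV hd tl b = some v → fstV hd tl c = some v →
      fstV hd tl d = some v →
      Decomposable hd tl F ((XPath F (a ++ b ++ c ++ d)).trace)) ∧
    -- (R₂) tr(abc) ≡ 0 when a and b intersect at a vertex w ≠ v
    (∀ a b c : List (DArrow A),
      IsClosedPath hd tl a → IsClosedPath hd tl b → IsClosedPath hd tl c →
      fstV hd tl a = some v → fstV hd tl b = some v → fstV hd tl c = some v →
      ∀ x₁ y₁ x₂ y₂ : List (DArrow A), a = x₁ ++ y₁ → b = x₂ ++ y₂ →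
        IsPathL hd tl x₁ → IsPathL hd tl y₁ → IsPathL hd tl x₂ → IsPathL hd tl y₂ →
        ∀ w : V, lstV hd tl x₁ = some w → lstV hd tl x₂ = some w → w ≠ v →
        Decomposable hd tl F ((XPath F (a ++ b ++ c)).trace)) := by
  have h2 : (2 : F) ≠ 0 := Ring.two_ne_zero hchar
  refine ⟨fun a b c d hca hcb hcc hcd hav hbv hcv hdv => ?_,
    fun a b c hca hcb hcc hav hbv hcv x₁ y₁ x₂ y₂ hax hby hx₁ hy₁ hx₂ hy₂ w hx₁w hx₂w _ => ?_⟩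
  · rw [← mem_decomposableSubmodule_iff, XPath_append, XPath_append, XPath_append]
    exact trace_mul_mul_mul_mem h2 (isPathMatrix_XPath_of_isClosedPath hca hav)
      (isPathMatrix_XPath_of_isClosedPath hcb hbv) (isPathMatrix_XPath_of_isClosedPath hcc hcv)
      (isPathMatrix_XPath_of_isClosedPath hcd hdv)
  · subst hax hby
    obtain ⟨hX₁, hY₁⟩ :=
      isPathMatrix_XPath_of_isClosedPath_append (F := F) hca hav hx₁ hy₁ hx₁w
    obtain ⟨hX₂, hY₂⟩ :=
      isPathMatrix_XPath_of_isClosedPath_append (F := F) hcb hbv hx₂ hy₂ hx₂w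
    rw [← mem_decomposableSubmodule_iff]
    simp only [XPath_append]
    exact trace_mul_mul_mul_mul_mem h2 hX₁ hY₁ hX₂ hY₂
      (isPathMatrix_XPath_of_isClosedPath hcc hcv)

/-- Lemma 4, relations `R₁` and `R₂` for `char F ≠ 2`. -/
theorem statement6 (F : Type) [Field F] [Infinite F] (hchar : ringChar F ≠ 2)
    {V A : Type} [Fintype V] [Fintype A] (hd tl : A → V) (v : V) :
    -- (R₁) tr(abcd) ≡ 0
    (∀ a b c d : List (DArrow A),
      IsClosedPath hd tl a → IsClosedPath hd tl b → IsClosedPath hd tl c →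
      IsClosedPath hd tl d →
      fstV hd tl a = some v → fstV hd tl b = some v → fstV hd tl c = some v →
      fstV hd tl d = some v →
      Decomposable hd tl F ((XPath F (a ++ b ++ c ++ d)).trace)) ∧
    -- (R₂) tr(abc) ≡ 0 when a and b intersect at a vertex w ≠ v
    (∀ a b c : List (DArrow A),
      IsClosedPath hd tl a → IsClosedPath hd tl b → IsClosedPath hd tl c →
      fstV hd tl a = some v → fstV hd tl b = some v → fstV hd tl c = some v →
      ∀ x₁ y₁ x₂ y₂ : List (DArrow A), a = x₁ ++ y₁ → b = x₂ ++ y₂ →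
        IsPathL hd tl x₁ → IsPathL hd tl y₁ → IsPathL hd tl x₂ → IsPathL hd tl y₂ →
        ∀ w : V, lstV hd tl x₁ = some w → lstV hd tl x₂ = some w → w ≠ v →
        Decomposable hd tl F ((XPath F (a ++ b ++ c)).trace)) :=
  statement6_general F hchar hd tl v
end

section
/- Let F be a field with char F ≠ 2 and let Y be a 2×2 matrix over F with tr(Y) = 0. Then there exist 2×2 matrices X, C, D over F such that tr(C) = tr(D) = tr(CD) = 0 and Y = X C D X*, where X* := −J₂XᵀJ₂ and J₂ = [[0,1],[−1,0]]. -/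
open MvPolynomial Matrix

set_option maxHeartbeats 1000000
set_option synthInstance.maxHeartbeats 400000

/-- Lemma 15. For `char F ≠ 2`: every traceless `2×2` matrix `Y`
can be written as `Y = X C D X*` with `tr C = tr D = tr(CD) = 0`, where
`X* = -J₂XᵀJ₂`. -/
theorem statement18 (F : Type) [Field F] (hchar : ringChar F ≠ 2)
    (Y : Matrix (Fin 2) (Fin 2) F) (hY : Y.trace = 0) :
    ∃ X C D : Matrix (Fin 2) (Fin 2) F,
      C.trace = 0 ∧ D.trace = 0 ∧ (C * D).trace = 0 ∧
      Y = X * C * D * (-(J2 F * Xᵀ * J2 F)) := by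
  have h2 : (2 : F) ≠ 0 := by
    intro h
    exact hchar (CharP.ringChar_of_prime_eq_zero Nat.prime_two h)
  have hY' : Y 1 1 = -(Y 0 0) := by
    have : Y 0 0 + Y 1 1 = 0 := by simpa [Matrix.trace, Fin.sum_univ_two] using hY
    linear_combination this
  have hW : -(J2 F * (1 : Matrix (Fin 2) (Fin 2) F) * J2 F) = 1 := by
    ext i j
    fin_cases i <;> fin_cases j <;>
      simp [J2, Matrix.mul_apply, Fin.sum_univ_two, Matrix.one_apply]
  -- choose a traceless C with C * C = 1 and trace (C * Y) = 0
  have key : ∀ C : Matrix (Fin 2) (Fin 2) F, C.trace = 0 → C * C = 1 →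
      (C * Y).trace = 0 →
      ∃ X C D : Matrix (Fin 2) (Fin 2) F,
        C.trace = 0 ∧ D.trace = 0 ∧ (C * D).trace = 0 ∧
        Y = X * C * D * (-(J2 F * Xᵀ * J2 F)) := by
    intro C hC hC2 hCY
    refine ⟨1, C, C * Y, hC, hCY, ?_, ?_⟩
    · rw [← mul_assoc, hC2, one_mul]; exact hY
    · rw [Matrix.transpose_one, hW, one_mul, mul_one, ← mul_assoc, hC2, one_mul]
  by_cases hc : Y 1 0 ≠ 0
  · refine key !![1, -2 * Y 0 0 / Y 1 0; 0, -1] ?_ ?_ ?_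
    · simp [Matrix.trace, Fin.sum_univ_two]
    · ext i j
      fin_cases i <;> fin_cases j <;>
        simp [Matrix.mul_apply, Fin.sum_univ_two, Matrix.one_apply]
    · simp only [Matrix.trace, Fin.sum_univ_two, Matrix.mul_apply, Matrix.diag]
      simp [Matrix.cons_val_zero, Matrix.cons_val_one, hY']
      field_simp
      ring
  push_neg at hc
  by_cases hb : Y 0 1 ≠ 0
  · refine key !![1, 0; -2 * Y 0 0 / Y 0 1, -1] ?_ ?_ ?_
    · simp [Matrix.trace, Fin.sum_univ_two]
    · ext i j
      fin_cases i <;> fin_cases j <;>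
        simp [Matrix.mul_apply, Fin.sum_univ_two, Matrix.one_apply]
    · simp only [Matrix.trace, Fin.sum_univ_two, Matrix.mul_apply, Matrix.diag]
      simp [Matrix.cons_val_zero, Matrix.cons_val_one, hY']
      field_simp
      ring
  push_neg at hb
  · refine key !![0, 1; 1, 0] ?_ ?_ ?_
    · simp [Matrix.trace, Fin.sum_univ_two]
    · ext i j
      fin_cases i <;> fin_cases j <;>
        simp [Matrix.mul_apply, Fin.sum_univ_two, Matrix.one_apply]
    · simp [Matrix.trace, Fin.sum_univ_two, Matrix.mul_apply, Matrix.vecMul,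
        dotProduct, hb, hc]
end
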